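/- For every complex number v with |v| ≤ 1, the series (1/2) ∑_{m=1}^∞ (m!)^2 4^m v^{2m} / ((2m)! m^2) converges absolutely and equals arcsin(v)^2. -/

import Mathlib

/-!
On the open unit disc the series `S z = ∑ aₘ z^(2m+2)` can be differentiated termwise, and the
recurrence `(2m+4)(2m+3) aₘ₊₁ = (2m+2)² aₘ` says exactly that `(1 - z²) S'' - z S' = 2`.
With `s z = √(1 - z²)` this gives `(s S')' = 2 / s = 2 arcsin'`, so `s S' = 2 arcsin`, i.e.
`S' = (arcsin²)'`, and `S = arcsin²` since both vanish at `0`. The estimate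
`4ⁿ ≤ 2 √n C(2n, n)` gives `aₘ ≤ (m+1)^(-3/2)`, so the series converges uniformly on the closed
disc and the identity extends to the boundary by continuity.
-/

open Complex

/-- The principal branch of the complex arcsine. -/
noncomputable def carcsin (z : ℂ) : ℂ :=
  -Complex.I * Complex.log (Complex.I * z + (1 - z ^ 2) ^ ((1 : ℂ) / 2))

open Metric Set

namespace Nat

theorem centralBinom_mul_factorial_sq (n : ℕ) : centralBinom n * n ! ^ 2 = (2 * n)! := by
  rw [centralBinom_eq_two_mul_choose, two_mul, sq, ← mul_assoc,
    add_choose_mul_factorial_mul_factorial]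

theorem four_pow_sq_le_mul_centralBinom_sq {n : ℕ} (hn : 0 < n) :
    (4 ^ n) ^ 2 ≤ 4 * n * centralBinom n ^ 2 := by
  induction n, hn using le_induction with
  | base => simp [centralBinom, choose]
  | succ n _ ih =>
    have step := succ_mul_centralBinom_succ n
    suffices (n + 1) * (4 ^ (n + 1)) ^ 2 ≤ (n + 1) * (4 * (n + 1) * centralBinom (n + 1) ^ 2) from
      le_of_mul_le_mul_left this n.succ_pos
    calc (n + 1) * (4 ^ (n + 1)) ^ 2 = 16 * ((n + 1) * (4 ^ n) ^ 2) := by ring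
      _ ≤ 16 * ((n + 1) * (4 * n * centralBinom n ^ 2)) := by gcongr
      _ = 16 * (4 * n * (n + 1) * centralBinom n ^ 2) := by ring
      _ ≤ 16 * ((2 * n + 1) ^ 2 * centralBinom n ^ 2) := by gcongr; nlinarith
      _ = 4 * (2 * (2 * n + 1) * centralBinom n) ^ 2 := by ring
      _ = (n + 1) * (4 * (n + 1) * centralBinom (n + 1) ^ 2) := by rw [← step]; ring

end Nat

theorem summable_two_mul_add_mul_pow (j : ℕ) {r : ℝ} (h0 : 0 ≤ r) (h1 : r < 1) :
    Summable fun m : ℕ => ((2 * m + j + 1 : ℕ) : ℝ) * r ^ m := by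
  have hr : ‖r‖ < 1 := by rwa [Real.norm_of_nonneg h0]
  refine (((summable_pow_mul_geometric_of_norm_lt_one 1 hr).mul_left 2).add
    ((summable_geometric_of_lt_one h0 h1).mul_left ((j : ℝ) + 1))).congr fun m => ?_
  push_cast; ring

theorem norm_pow_two_mul_add_le {y : ℂ} {r : ℝ} (hy : ‖y‖ ≤ r) (hr : r ≤ 1) (m j : ℕ) :
    ‖y ^ (2 * m + j)‖ ≤ r ^ m := by
  rw [norm_pow]
  calc ‖y‖ ^ (2 * m + j) ≤ ‖y‖ ^ m :=
        pow_le_pow_of_le_one (norm_nonneg y) (hy.trans hr) (by omega)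
    _ ≤ r ^ m := pow_le_pow_left₀ (norm_nonneg y) hy m

section TermwiseDerivative

variable {c : ℕ → ℂ} {C : ℝ}

theorem norm_mul_pow_two_mul_add_le (hc : ∀ m, ‖c m‖ ≤ C) {y : ℂ} {r : ℝ} (hy : ‖y‖ ≤ r)
    (hr : r ≤ 1) (m j : ℕ) :
    ‖c m * (2 * m + j + 1 : ℕ) * y ^ (2 * m + j)‖ ≤ C * (((2 * m + j + 1 : ℕ) : ℝ) * r ^ m) := by
  rw [norm_mul, norm_mul, Complex.norm_natCast, mul_assoc]
  gcongr
  · exact (norm_nonneg _).trans (hc m)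
  · exact hc m
  · exact norm_pow_two_mul_add_le hy hr m j

theorem summable_mul_pow_two_mul_add (hc : ∀ m, ‖c m‖ ≤ C) (j : ℕ) {z : ℂ} (hz : ‖z‖ < 1) :
    Summable fun m => c m * (2 * m + j + 1 : ℕ) * z ^ (2 * m + j) :=
  .of_norm_bounded ((summable_two_mul_add_mul_pow j (norm_nonneg z) hz).mul_left C)
    (norm_mul_pow_two_mul_add_le hc le_rfl hz.le · j)

theorem hasDerivAt_tsum_mul_pow_two_mul_add (hc : ∀ m, ‖c m‖ ≤ C) (j : ℕ) {z : ℂ}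
    (hz : ‖z‖ < 1) :
    HasDerivAt (fun y => ∑' m, c m * y ^ (2 * m + j + 1))
      (∑' m, c m * (2 * m + j + 1 : ℕ) * z ^ (2 * m + j)) z := by
  obtain ⟨r, hzr, hr1⟩ := exists_between hz
  have hr0 : 0 < r := (norm_nonneg z).trans_lt hzr
  refine hasDerivAt_tsum_of_isPreconnected
    (g' := fun m y => c m * (2 * m + j + 1 : ℕ) * y ^ (2 * m + j))
    ((summable_two_mul_add_mul_pow j hr0.le hr1).mul_left C) isOpen_ball
    (convex_ball 0 r).isPreconnected (fun m y _ => ?_)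
    (fun m y hy => norm_mul_pow_two_mul_add_le hc (mem_ball_zero_iff.mp hy).le hr1.le m j)
    (mem_ball_self hr0) (by simp) (mem_ball_zero_iff.mpr hzr)
  simpa [mul_assoc] using (hasDerivAt_pow (2 * m + j + 1) y).const_mul (c m)

end TermwiseDerivative

theorem IsOpen.eqOn_of_hasDerivAt {𝕜 G : Type*} [RCLike 𝕜] [NormedAddCommGroup G]
    [NormedSpace 𝕜 G] {s : Set 𝕜} {f g f' : 𝕜 → G} {x : 𝕜} (hs : IsOpen s)
    (hs' : IsPreconnected s) (hf : ∀ y ∈ s, HasDerivAt f (f' y) y)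
    (hg : ∀ y ∈ s, HasDerivAt g (f' y) y) (hx : x ∈ s) (hfg : f x = g x) : EqOn f g s :=
  hs.eqOn_of_deriv_eq hs' (fun y hy => (hf y hy).differentiableAt.differentiableWithinAt)
    (fun y hy => (hg y hy).differentiableAt.differentiableWithinAt)
    (fun y hy => (hf y hy).deriv.trans (hg y hy).deriv.symm) hx hfg

namespace Complex

theorem sq_sqrt (w : ℂ) : sqrt w ^ 2 = w :=
  cpow_ofNat_inv_pow w 2

theorem re_sqrt_nonneg (w : ℂ) : 0 ≤ (sqrt w).re := by
  rw [sqrt, cpow_inv_two_re]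
  exact Real.sqrt_nonneg _

theorem mem_slitPlane_of_re_add_inv_nonneg {w : ℂ} (hw : w ≠ 0) (h : 0 ≤ (w + w⁻¹).re) :
    w ∈ slitPlane := by
  by_contra hmem
  rw [mem_slitPlane_iff, not_or, not_lt, not_not] at hmem
  obtain ⟨hre, him⟩ := hmem
  have hre' : w.re < 0 := hre.lt_of_ne fun h0 => hw (ext h0 him)
  have hinv : (w⁻¹).re < 0 := by
    rw [inv_re]; exact div_neg_of_neg_of_pos hre' (normSq_pos.mpr hw)
  rw [add_re] at h
  linarith

theorem re_one_sub_sq_nonneg {z : ℂ} (hz : ‖z‖ ≤ 1) : 0 ≤ (1 - z ^ 2).re := by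
  have := abs_re_le_norm z
  have : z.re ^ 2 ≤ 1 := by nlinarith [abs_nonneg z.re, sq_abs z.re]
  simp only [sub_re, one_re, sq, mul_re]
  nlinarith

theorem re_one_sub_sq_pos {z : ℂ} (hz : ‖z‖ < 1) : 0 < (1 - z ^ 2).re := by
  have := abs_re_le_norm z
  have : z.re ^ 2 < 1 := by nlinarith [abs_nonneg z.re, sq_abs z.re]
  simp only [sub_re, one_re, sq, mul_re]
  nlinarith

theorem I_mul_add_sqrt_one_sub_sq_mem_slitPlane (z : ℂ) :
    I * z + sqrt (1 - z ^ 2) ∈ slitPlane := by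
  have hmul : (I * z + sqrt (1 - z ^ 2)) * (sqrt (1 - z ^ 2) - I * z) = 1 := by
    linear_combination sq_sqrt (1 - z ^ 2) - z ^ 2 * I_sq
  refine mem_slitPlane_of_re_add_inv_nonneg (left_ne_zero_of_mul_eq_one hmul) ?_
  rw [inv_eq_of_mul_eq_one_right hmul]
  ring_nf
  simpa using mul_nonneg (re_sqrt_nonneg (1 - z ^ 2)) zero_le_two

theorem sqrt_one_sub_sq_ne_zero {z : ℂ} (hz : ‖z‖ < 1) : sqrt (1 - z ^ 2) ≠ 0 := by
  intro h
  have := sq_sqrt (1 - z ^ 2)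
  rw [h, zero_pow two_ne_zero] at this
  simpa [← this] using re_one_sub_sq_pos hz

theorem hasDerivAt_sqrt_one_sub_sq {z : ℂ} (hz : ‖z‖ < 1) :
    HasDerivAt (fun y => sqrt (1 - y ^ 2)) (-z / sqrt (1 - z ^ 2)) z := by
  have h := (hasDerivAt_sqrt (Or.inl (re_one_sub_sq_pos hz))).comp z
    ((hasDerivAt_pow 2 z).const_sub 1)
  refine (h : HasDerivAt (fun y => sqrt (1 - y ^ 2)) _ z).congr_deriv ?_
  rw [show (-1 / 2 : ℂ) = -2⁻¹ by norm_num, cpow_neg, ← sqrt]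
  field_simp [sqrt_one_sub_sq_ne_zero hz]
  ring

end Complex

theorem carcsin_eq_log (z : ℂ) : carcsin z = -I * log (I * z + sqrt (1 - z ^ 2)) := by
  rw [carcsin, Complex.sqrt, one_div]

theorem carcsin_zero : carcsin 0 = 0 := by
  simp [carcsin_eq_log]

theorem hasDerivAt_carcsin {z : ℂ} (hz : ‖z‖ < 1) :
    HasDerivAt carcsin (1 / sqrt (1 - z ^ 2)) z := by
  have hs := sqrt_one_sub_sq_ne_zero hz
  have hw0 := slitPlane_ne_zero (I_mul_add_sqrt_one_sub_sq_mem_slitPlane z)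
  have hw : HasDerivAt (fun y => I * y + sqrt (1 - y ^ 2)) (I * 1 + -z / sqrt (1 - z ^ 2)) z :=
    ((hasDerivAt_id z).const_mul I).add (hasDerivAt_sqrt_one_sub_sq hz)
  rw [show carcsin = _ from funext carcsin_eq_log]
  refine ((hw.clog (I_mul_add_sqrt_one_sub_sq_mem_slitPlane z)).const_mul (-I)).congr_deriv ?_
  field_simp
  linear_combination -sqrt (1 - z ^ 2) * I_sq

theorem continuousAt_carcsin {z : ℂ} (hz : ‖z‖ ≤ 1) : ContinuousAt carcsin z := by
  rw [show carcsin = _ from funext carcsin_eq_log]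
  have hs : ContinuousAt (fun y : ℂ => sqrt (1 - y ^ 2)) z :=
    ContinuousAt.comp (g := sqrt) (continuousAt_sqrt (Or.inl (re_one_sub_sq_nonneg hz)))
      (by fun_prop)
  exact continuousAt_const.mul (((continuousAt_const.mul continuousAt_id).add hs).clog
    (I_mul_add_sqrt_one_sub_sq_mem_slitPlane z))

noncomputable def arcsinSqCoeff (m : ℕ) : ℝ :=
  4 ^ (m + 1) / (2 * ((m : ℝ) + 1) ^ 2 * Nat.centralBinom (m + 1))

theorem arcsinSqCoeff_zero : arcsinSqCoeff 0 = 1 := by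
  norm_num [arcsinSqCoeff, Nat.centralBinom, Nat.choose]

theorem arcsinSqCoeff_nonneg (m : ℕ) : 0 ≤ arcsinSqCoeff m := by
  unfold arcsinSqCoeff; positivity

theorem arcsinSqCoeff_succ_mul (m : ℕ) :
    arcsinSqCoeff (m + 1) * ((2 * m + 4) * (2 * m + 3)) = arcsinSqCoeff m * (2 * m + 2) ^ 2 := by
  have step : ((m : ℝ) + 2) * Nat.centralBinom (m + 1 + 1)
      = 2 * (2 * m + 3) * Nat.centralBinom (m + 1) := by
    exact_mod_cast (Nat.succ_mul_centralBinom_succ (m + 1)).trans (by ring)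
  have hC : (0 : ℝ) < Nat.centralBinom (m + 1) := by exact_mod_cast Nat.centralBinom_pos _
  have hC' : (0 : ℝ) < Nat.centralBinom (m + 1 + 1) := by exact_mod_cast Nat.centralBinom_pos _
  unfold arcsinSqCoeff
  push_cast
  field_simp
  linear_combination (-16 * 4 ^ m * ((m : ℝ) + 2)) * step

theorem arcsinSqCoeff_mul_le_two (m : ℕ) : arcsinSqCoeff m * (2 * m + 2) ≤ 2 := by
  have hC : (0 : ℝ) < Nat.centralBinom (m + 1) := by exact_mod_cast Nat.centralBinom_pos _
  have h : (4 : ℝ) ^ (m + 1) ≤ 2 * (m + 1) * Nat.centralBinom (m + 1) := by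
    exact_mod_cast Nat.four_pow_le_two_mul_self_mul_centralBinom (m + 1) m.succ_pos
  unfold arcsinSqCoeff
  rw [div_mul_eq_mul_div, div_le_iff₀ (by positivity)]
  nlinarith

theorem arcsinSqCoeff_le_two (m : ℕ) : arcsinSqCoeff m ≤ 2 := by
  nlinarith [arcsinSqCoeff_mul_le_two m, arcsinSqCoeff_nonneg m, (m.cast_nonneg : (0 : ℝ) ≤ m)]

theorem arcsinSqCoeff_sq_mul_le (m : ℕ) : arcsinSqCoeff m ^ 2 * ((m : ℝ) + 1) ^ 3 ≤ 1 := by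
  have hC : (0 : ℝ) < Nat.centralBinom (m + 1) := by exact_mod_cast Nat.centralBinom_pos _
  have h : ((4 : ℝ) ^ (m + 1)) ^ 2 ≤ 4 * (m + 1) * Nat.centralBinom (m + 1) ^ 2 := by
    exact_mod_cast Nat.four_pow_sq_le_mul_centralBinom_sq m.succ_pos
  unfold arcsinSqCoeff
  rw [div_pow, div_mul_eq_mul_div, div_le_one (by positivity)]
  calc ((4 : ℝ) ^ (m + 1)) ^ 2 * ((m : ℝ) + 1) ^ 3
      ≤ 4 * (m + 1) * Nat.centralBinom (m + 1) ^ 2 * ((m : ℝ) + 1) ^ 3 := by gcongr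
    _ = (2 * ((m : ℝ) + 1) ^ 2 * Nat.centralBinom (m + 1)) ^ 2 := by ring

theorem arcsinSqCoeff_le_rpow (m : ℕ) : arcsinSqCoeff m ≤ ((m : ℝ) + 1) ^ (-(3 / 2) : ℝ) := by
  have hm : (0 : ℝ) < m + 1 := by positivity
  set x := ((m : ℝ) + 1) ^ (3 / 2 : ℝ)
  have hx : 0 < x := by positivity
  have hx2 : x ^ 2 = ((m : ℝ) + 1) ^ 3 := by
    rw [← Real.rpow_natCast, ← Real.rpow_mul hm.le]; norm_num
  have hmul : arcsinSqCoeff m * x ≤ 1 := by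
    refine (pow_le_one_iff_of_nonneg (by have := arcsinSqCoeff_nonneg m; positivity)
      two_ne_zero).mp ?_
    rw [mul_pow, hx2]
    exact arcsinSqCoeff_sq_mul_le m
  rwa [Real.rpow_neg hm.le, ← one_div, le_div_iff₀ hx]

theorem summable_arcsinSqCoeff : Summable arcsinSqCoeff := by
  have h : Summable fun m : ℕ => ((m : ℝ) + 1) ^ (-(3 / 2) : ℝ) := by
    refine ((summable_nat_add_iff 1).mpr
      (Real.summable_nat_rpow.mpr (by norm_num : (-(3 / 2) : ℝ) < -1))).congr fun m => ?_
    push_cast; rfl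
  exact h.of_nonneg_of_le arcsinSqCoeff_nonneg arcsinSqCoeff_le_rpow

theorem norm_arcsinSqCoeff_le (m : ℕ) : ‖(arcsinSqCoeff m : ℂ)‖ ≤ 2 := by
  rw [Complex.norm_real, Real.norm_of_nonneg (arcsinSqCoeff_nonneg m)]
  exact arcsinSqCoeff_le_two m

theorem norm_arcsinSqCoeff_mul_le (m : ℕ) :
    ‖(arcsinSqCoeff m : ℂ) * (2 * m + 2 : ℕ)‖ ≤ 2 := by
  rw [← Complex.ofReal_natCast, ← Complex.ofReal_mul, Complex.norm_real,
    Real.norm_of_nonneg (by positivity [arcsinSqCoeff_nonneg m])]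
  exact_mod_cast arcsinSqCoeff_mul_le_two m

theorem norm_arcsinSqCoeff_mul_pow_le {z : ℂ} (hz : ‖z‖ ≤ 1) (m : ℕ) :
    ‖(arcsinSqCoeff m : ℂ) * z ^ (2 * m + 2)‖ ≤ arcsinSqCoeff m := by
  rw [norm_mul, Complex.norm_real, Real.norm_of_nonneg (arcsinSqCoeff_nonneg m), norm_pow]
  exact mul_le_of_le_one_right (arcsinSqCoeff_nonneg m) (pow_le_one₀ (norm_nonneg z) hz)

noncomputable def arcsinSqSeries (z : ℂ) : ℂ :=
  ∑' m, (arcsinSqCoeff m : ℂ) * z ^ (2 * m + 2)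

noncomputable def arcsinSqSeriesDeriv (z : ℂ) : ℂ :=
  ∑' m, (arcsinSqCoeff m : ℂ) * (2 * m + 2 : ℕ) * z ^ (2 * m + 1)

noncomputable def arcsinSqSeriesDeriv2 (z : ℂ) : ℂ :=
  ∑' m, (arcsinSqCoeff m : ℂ) * (2 * m + 2 : ℕ) * (2 * m + 1 : ℕ) * z ^ (2 * m)

theorem hasDerivAt_arcsinSqSeries {z : ℂ} (hz : ‖z‖ < 1) :
    HasDerivAt arcsinSqSeries (arcsinSqSeriesDeriv z) z :=
  hasDerivAt_tsum_mul_pow_two_mul_add norm_arcsinSqCoeff_le 1 hz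

theorem hasDerivAt_arcsinSqSeriesDeriv {z : ℂ} (hz : ‖z‖ < 1) :
    HasDerivAt arcsinSqSeriesDeriv (arcsinSqSeriesDeriv2 z) z :=
  hasDerivAt_tsum_mul_pow_two_mul_add norm_arcsinSqCoeff_mul_le 0 hz

theorem one_sub_sq_mul_arcsinSqSeriesDeriv2 {z : ℂ} (hz : ‖z‖ < 1) :
    (1 - z ^ 2) * arcsinSqSeriesDeriv2 z - z * arcsinSqSeriesDeriv z = 2 := by
  set f₁ := fun m : ℕ => (arcsinSqCoeff m : ℂ) * (2 * m + 2 : ℕ) * z ^ (2 * m + 1)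
  set f₂ := fun m : ℕ => (arcsinSqCoeff m : ℂ) * (2 * m + 2 : ℕ) * (2 * m + 1 : ℕ) * z ^ (2 * m)
  have h₁ : HasSum f₁ (arcsinSqSeriesDeriv z) :=
    (summable_mul_pow_two_mul_add norm_arcsinSqCoeff_le 1 hz).hasSum
  have h₂ : HasSum f₂ (arcsinSqSeriesDeriv2 z) :=
    (summable_mul_pow_two_mul_add norm_arcsinSqCoeff_mul_le 0 hz).hasSum
  have hshift : HasSum (fun m => f₂ (m + 1)) (arcsinSqSeriesDeriv2 z - 2) := by
    have h₂0 : f₂ 0 = 2 := by simp [f₂, arcsinSqCoeff_zero]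
    simpa [h₂0] using (hasSum_nat_add_iff' (f := f₂) 1).mpr h₂
  have hrec : ∀ m, f₂ (m + 1) = z ^ 2 * f₂ m + z * f₁ m := by
    intro m
    have h := congrArg ((↑) : ℝ → ℂ) (arcsinSqCoeff_succ_mul m)
    simp only [f₁, f₂]
    push_cast at h ⊢
    linear_combination z ^ (2 * m + 2) * h
  have := hshift.unique (((h₂.mul_left (z ^ 2)).add (h₁.mul_left z)).congr_fun hrec)
  linear_combination this

theorem continuousOn_arcsinSqSeries : ContinuousOn arcsinSqSeries (closedBall 0 1) :=
  continuousOn_tsum (f := fun m (z : ℂ) => (arcsinSqCoeff m : ℂ) * z ^ (2 * m + 2))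
    (fun _ => by fun_prop) summable_arcsinSqCoeff
    fun m _ hz => norm_arcsinSqCoeff_mul_pow_le (mem_closedBall_zero_iff.mp hz) m

theorem two_mul_carcsin_eq {z : ℂ} (hz : ‖z‖ < 1) :
    2 * carcsin z = sqrt (1 - z ^ 2) * arcsinSqSeriesDeriv z := by
  refine IsOpen.eqOn_of_hasDerivAt (f := fun y => 2 * carcsin y)
    (g := fun y => sqrt (1 - y ^ 2) * arcsinSqSeriesDeriv y) (f' := fun y => 2 / sqrt (1 - y ^ 2))
    isOpen_ball (convex_ball 0 1).isPreconnected (fun y hy => ?_) (fun y hy => ?_)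
    (mem_ball_self one_pos) (by simp [carcsin_zero, arcsinSqSeriesDeriv])
    (mem_ball_zero_iff.mpr hz)
  · rw [mem_ball_zero_iff] at hy
    exact ((hasDerivAt_carcsin hy).const_mul 2).congr_deriv (by ring)
  · rw [mem_ball_zero_iff] at hy
    have hs := sqrt_one_sub_sq_ne_zero hy
    refine ((hasDerivAt_sqrt_one_sub_sq hy).mul
      (hasDerivAt_arcsinSqSeriesDeriv hy)).congr_deriv ?_
    field_simp
    linear_combination one_sub_sq_mul_arcsinSqSeriesDeriv2 hy +
      arcsinSqSeriesDeriv2 y * sq_sqrt (1 - y ^ 2)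

theorem arcsinSqSeries_eq_sq_carcsin_of_norm_lt_one {z : ℂ} (hz : ‖z‖ < 1) :
    arcsinSqSeries z = carcsin z ^ 2 := by
  refine IsOpen.eqOn_of_hasDerivAt (g := fun y => carcsin y ^ 2) isOpen_ball
    (convex_ball 0 1).isPreconnected
    (fun y hy => hasDerivAt_arcsinSqSeries (mem_ball_zero_iff.mp hy)) (fun y hy => ?_)
    (mem_ball_self one_pos) (by simp [arcsinSqSeries, carcsin_zero]) (mem_ball_zero_iff.mpr hz)
  rw [mem_ball_zero_iff] at hy
  have hs := sqrt_one_sub_sq_ne_zero hy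
  refine ((hasDerivAt_carcsin hy).pow 2).congr_deriv ?_
  field_simp
  linear_combination two_mul_carcsin_eq hy

theorem arcsinSqSeries_eq_sq_carcsin {z : ℂ} (hz : ‖z‖ ≤ 1) :
    arcsinSqSeries z = carcsin z ^ 2 :=
  EqOn.of_subset_closure
    (fun y hy => arcsinSqSeries_eq_sq_carcsin_of_norm_lt_one (mem_ball_zero_iff.mp hy))
    continuousOn_arcsinSqSeries
    (fun y hy => ((continuousAt_carcsin (mem_closedBall_zero_iff.mp hy)).pow 2).continuousWithinAt)
    ball_subset_closedBall (by rw [closure_ball 0 one_ne_zero]) (mem_closedBall_zero_iff.mpr hz)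

theorem factorial_sq_mul_four_pow_mul_pow_div_eq (m : ℕ) (v : ℂ) :
    ((Nat.factorial (m + 1) : ℂ) ^ 2 * (4 : ℂ) ^ (m + 1) * v ^ (2 * (m + 1))) /
      ((Nat.factorial (2 * (m + 1)) : ℂ) * ((m : ℂ) + 1) ^ 2) =
      2 * ((arcsinSqCoeff m : ℂ) * v ^ (2 * m + 2)) := by
  have hC : (Nat.centralBinom (m + 1) : ℂ) ≠ 0 := by exact_mod_cast (Nat.centralBinom_pos _).ne'
  have hF : (Nat.factorial (m + 1) : ℂ) ≠ 0 := by exact_mod_cast (Nat.factorial_pos _).ne'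
  rw [← Nat.centralBinom_mul_factorial_sq, arcsinSqCoeff]
  push_cast
  field_simp
  ring

theorem arcsin_sq_series (v : ℂ) (hv : ‖v‖ ≤ 1) :
    Summable (fun m : ℕ =>
      ‖((Nat.factorial (m + 1) : ℂ) ^ 2 * (4 : ℂ) ^ (m + 1) * v ^ (2 * (m + 1))) /
        ((Nat.factorial (2 * (m + 1)) : ℂ) * ((m : ℂ) + 1) ^ 2)‖) ∧
    (1 / 2 : ℂ) * (∑' m : ℕ,
        ((Nat.factorial (m + 1) : ℂ) ^ 2 * (4 : ℂ) ^ (m + 1) * v ^ (2 * (m + 1))) /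
          ((Nat.factorial (2 * (m + 1)) : ℂ) * ((m : ℂ) + 1) ^ 2)) = carcsin v ^ 2 := by
  simp_rw [factorial_sq_mul_four_pow_mul_pow_div_eq]
  refine ⟨?_, ?_⟩
  · refine (summable_arcsinSqCoeff.mul_left 2).of_nonneg_of_le (fun _ => norm_nonneg _)
      fun m => ?_
    rw [norm_mul, Complex.norm_two]
    exact mul_le_mul_of_nonneg_left (norm_arcsinSqCoeff_mul_pow_le hv m) zero_le_two
  · rw [tsum_mul_left, ← arcsinSqSeries_eq_sq_carcsin hv, arcsinSqSeries]
    ring
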